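/- arXiv:2201.03831 — 6 statements merged into one kernel-verified Lean document; each statement's English description precedes it below -/
import Mathlib

section
/- For the Zermelo extended system vector fields X and Y as above, the iterated bracket [[Y,X],Y] equals cos α ∂/∂r + (sin α / m(r)) ∂/∂θ, and [[Y,X],X] equals (−μ'(r) sin α + m'(r)/m(r)²) ∂/∂θ. -/
open Real

/-- Lie bracket of vector fields on ℝ³ with the convention
`[X,Y](q) = DX(q)·Y(q) − DY(q)·X(q)`. -/
noncomputable def lieBracket (X Y : ℝ × ℝ × ℝ → ℝ × ℝ × ℝ) : ℝ × ℝ × ℝ → ℝ × ℝ × ℝ :=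
  fun q => fderiv ℝ X q (Y q) - fderiv ℝ Y q (X q)

noncomputable def P1 : ℝ × ℝ × ℝ →L[ℝ] ℝ := ContinuousLinearMap.fst ℝ ℝ (ℝ × ℝ)
noncomputable def P3 : ℝ × ℝ × ℝ →L[ℝ] ℝ :=
  (ContinuousLinearMap.snd ℝ ℝ ℝ).comp (ContinuousLinearMap.snd ℝ ℝ (ℝ × ℝ))

lemma key (a b c m : ℝ → ℝ) (ha : Differentiable ℝ a) (hb : Differentiable ℝ b)
    (hc : Differentiable ℝ c) (hm : Differentiable ℝ m) (hmpos : ∀ r, 0 < m r)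
    (q : ℝ × ℝ × ℝ) :
    HasFDerivAt (fun p : ℝ × ℝ × ℝ => (a p.2.2, b p.1 + c p.2.2 / m p.1, (0:ℝ)))
      ((deriv a q.2.2 • P3).prod
        (((deriv b q.1 - c q.2.2 * deriv m q.1 / (m q.1) ^ 2) • P1
          + (deriv c q.2.2 / m q.1) • P3).prod 0)) q := by
  have h3 : HasFDerivAt (fun p : ℝ × ℝ × ℝ => p.2.2) P3 q :=
    (hasFDerivAt_snd).comp q hasFDerivAt_snd
  have h1 : HasFDerivAt (fun p : ℝ × ℝ × ℝ => p.1) P1 q := hasFDerivAt_fst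
  have hA : HasFDerivAt (fun p : ℝ × ℝ × ℝ => a p.2.2) (deriv a q.2.2 • P3) q :=
    ((ha q.2.2).hasDerivAt).comp_hasFDerivAt q h3
  have hB : HasFDerivAt (fun p : ℝ × ℝ × ℝ => b p.1) (deriv b q.1 • P1) q :=
    ((hb q.1).hasDerivAt).comp_hasFDerivAt q h1
  have hC : HasFDerivAt (fun p : ℝ × ℝ × ℝ => c p.2.2) (deriv c q.2.2 • P3) q :=
    ((hc q.2.2).hasDerivAt).comp_hasFDerivAt q h3
  have hInv : HasFDerivAt (fun p : ℝ × ℝ × ℝ => (m p.1)⁻¹)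
      ((-deriv m q.1 / m q.1 ^ 2) • P1) q :=
    (((hm q.1).hasDerivAt).inv (ne_of_gt (hmpos q.1))).comp_hasFDerivAt q h1
  have hdiv : HasFDerivAt (fun p : ℝ × ℝ × ℝ => c p.2.2 / m p.1)
      (c q.2.2 • ((-deriv m q.1 / m q.1 ^ 2) • P1) + (m q.1)⁻¹ • (deriv c q.2.2 • P3)) q := by
    simp only [div_eq_mul_inv]
    exact hC.mul hInv
  have h2 := hB.add hdiv
  have h0 : HasFDerivAt (fun _ : ℝ × ℝ × ℝ => (0:ℝ)) 0 q := hasFDerivAt_const (𝕜 := ℝ) (0:ℝ) q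
  have H := hA.prodMk (h2.prodMk h0)
  have hne : m q.1 ≠ 0 := (hmpos q.1).ne'
  have hE : ((deriv a q.2.2 • P3).prod
        (((deriv b q.1 - c q.2.2 * deriv m q.1 / (m q.1) ^ 2) • P1
          + (deriv c q.2.2 / m q.1) • P3).prod (0 : ℝ × ℝ × ℝ →L[ℝ] ℝ)))
      = ((deriv a q.2.2 • P3).prod
        ((deriv b q.1 • P1 + (c q.2.2 • (-deriv m q.1 / m q.1 ^ 2) • P1
          + (m q.1)⁻¹ • deriv c q.2.2 • P3)).prod (0 : ℝ × ℝ × ℝ →L[ℝ] ℝ))) := by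
    refine ContinuousLinearMap.ext fun v => ?_
    simp [P1, P3, Prod.ext_iff]
    field_simp
    ring
  rw [hE]
  exact H

theorem iterated_brackets
    (μ m : ℝ → ℝ) (hμ : ContDiff ℝ (⊤ : ℕ∞) μ) (hm : ContDiff ℝ (⊤ : ℕ∞) m)
    (hmpos : ∀ r, 0 < m r)
    (X : ℝ × ℝ × ℝ → ℝ × ℝ × ℝ)
    (hX : X = fun q => (Real.cos q.2.2, μ q.1 + Real.sin q.2.2 / m q.1, (0 : ℝ)))
    (Y : ℝ × ℝ × ℝ → ℝ × ℝ × ℝ)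
    (hY : Y = fun _ => ((0 : ℝ), (0 : ℝ), (1 : ℝ))) :
    ∀ q : ℝ × ℝ × ℝ,
      lieBracket (lieBracket Y X) Y q
        = (Real.cos q.2.2, Real.sin q.2.2 / m q.1, (0 : ℝ)) ∧
      lieBracket (lieBracket Y X) X q
        = ((0 : ℝ), -deriv μ q.1 * Real.sin q.2.2 + deriv m q.1 / (m q.1) ^ 2, (0 : ℝ)) := by
  subst hX hY
  have hμ' : Differentiable ℝ μ := hμ.differentiable (by simp)
  have hm' : Differentiable ℝ m := hm.differentiable (by simp)
  have hXd := key Real.cos μ Real.sin m Real.differentiable_cos hμ' Real.differentiable_sin hm' hmpos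
  have hZd := key Real.sin (fun _ => (0:ℝ)) (fun x => -Real.cos x) m Real.differentiable_sin
    (differentiable_const _) Real.differentiable_cos.neg hm' hmpos
  have hZfun : lieBracket (fun _ => ((0:ℝ),(0:ℝ),(1:ℝ)))
      (fun q : ℝ × ℝ × ℝ => (Real.cos q.2.2, μ q.1 + Real.sin q.2.2 / m q.1, (0:ℝ)))
      = fun p : ℝ × ℝ × ℝ => (Real.sin p.2.2, (0:ℝ) + -Real.cos p.2.2 / m p.1, (0:ℝ)) := by
    funext q
    simp only [lieBracket, fderiv_const, Pi.zero_apply, ContinuousLinearMap.zero_apply,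
      (hXd q).fderiv]
    simp [P1, P3, Prod.ext_iff, Real.deriv_cos, Real.deriv_sin, neg_div]
  intro q
  have hne : m q.1 ≠ 0 := (hmpos q.1).ne'
  rw [hZfun]
  constructor
  · simp only [lieBracket, fderiv_const, Pi.zero_apply, ContinuousLinearMap.zero_apply,
      (hZd q).fderiv]
    have h1 : deriv (fun x => -Real.cos x) q.2.2 = Real.sin q.2.2 := by
      simp [Real.deriv_cos]
    simp [P1, P3, Prod.ext_iff, Real.deriv_sin, h1]
  · simp only [lieBracket, (hZd q).fderiv, (hXd q).fderiv]
    rw [show deriv (fun x => -Real.cos x) q.2.2 = Real.sin q.2.2 by simp [Real.deriv_cos]]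
    simp [P1, P3, Prod.ext_iff, Real.deriv_sin, Real.deriv_cos]
    field_simp
    linear_combination deriv m q.1 * Real.sin_sq_add_cos_sq q.2.2
end

section
/- The determinants D = det(Y, [Y,X], [[Y,X],Y]), D' = det(Y, [Y,X], [[Y,X],X]) and D'' = det(Y, [Y,X], X) for the Zermelo extended system are given by D = 1/m(r), D' = −μ'(r) sin²α + m'(r) sin α / m(r)², and D'' = μ(r) sin α + 1/m(r). -/
open Real

/-- Determinant of the 3×3 matrix whose columns are the three given vectors of ℝ³. -/
def det3 (u v w : ℝ × ℝ × ℝ) : ℝ :=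
  Matrix.det !![u.1, v.1, w.1; u.2.1, v.2.1, w.2.1; u.2.2, v.2.2, w.2.2]

noncomputable def zp1 : ℝ × ℝ × ℝ →L[ℝ] ℝ := ContinuousLinearMap.fst ℝ ℝ (ℝ × ℝ)
noncomputable def zp3 : ℝ × ℝ × ℝ →L[ℝ] ℝ :=
  (ContinuousLinearMap.snd ℝ ℝ ℝ).comp (ContinuousLinearMap.snd ℝ ℝ (ℝ × ℝ))

lemma fderivX_apply (μ m : ℝ → ℝ) (hμ : ContDiff ℝ (⊤ : ℕ∞) μ) (hm : ContDiff ℝ (⊤ : ℕ∞) m)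
    (hmpos : ∀ r, 0 < m r) (q v : ℝ × ℝ × ℝ) :
    fderiv ℝ (fun q : ℝ × ℝ × ℝ => (Real.cos q.2.2, μ q.1 + Real.sin q.2.2 / m q.1, (0:ℝ))) q v
      = (-Real.sin q.2.2 * v.2.2,
         deriv μ q.1 * v.1 +
           (Real.cos q.2.2 * v.2.2 * m q.1 - Real.sin q.2.2 * (deriv m q.1 * v.1)) / (m q.1)^2,
         0) := by
  have hne := ne_of_gt (hmpos q.1)
  have hp1 : HasFDerivAt (fun q : ℝ × ℝ × ℝ => q.1) zp1 q := zp1.hasFDerivAt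
  have hp3 : HasFDerivAt (fun q : ℝ × ℝ × ℝ => q.2.2) zp3 q := zp3.hasFDerivAt
  have hcos := (Real.hasDerivAt_cos q.2.2).comp_hasFDerivAt q hp3
  have hμ' := ((hμ.differentiable (by simp) q.1).hasDerivAt).comp_hasFDerivAt q hp1
  have hsin := (Real.hasDerivAt_sin q.2.2).comp_hasFDerivAt q hp3
  have hminv := (((hm.differentiable (by simp) q.1).hasDerivAt).inv hne).comp_hasFDerivAt q hp1
  simp only [Function.comp_def] at hcos hμ' hsin hminv
  have hdiv := hsin.mul hminv
  have h := hcos.prodMk ((hμ'.add hdiv).prodMk (hasFDerivAt_const (0:ℝ) q))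
  simp only [div_eq_mul_inv]
  simp only [Pi.add_apply, Pi.mul_apply, Pi.neg_apply, Pi.inv_apply] at h
  rw [h.fderiv]
  simp [zp1, zp3, ContinuousLinearMap.prod_apply, ContinuousLinearMap.smul_apply, smul_smul]
  field_simp
  ring

lemma fderivZ_apply (m : ℝ → ℝ) (hm : ContDiff ℝ (⊤ : ℕ∞) m)
    (hmpos : ∀ r, 0 < m r) (q v : ℝ × ℝ × ℝ) :
    fderiv ℝ (fun q : ℝ × ℝ × ℝ => (Real.sin q.2.2, -(Real.cos q.2.2 / m q.1), (0:ℝ))) q v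
      = (Real.cos q.2.2 * v.2.2,
         (Real.sin q.2.2 * v.2.2 * m q.1 + Real.cos q.2.2 * (deriv m q.1 * v.1)) / (m q.1)^2,
         0) := by
  have hne := ne_of_gt (hmpos q.1)
  have hp1 : HasFDerivAt (fun q : ℝ × ℝ × ℝ => q.1) zp1 q := zp1.hasFDerivAt
  have hp3 : HasFDerivAt (fun q : ℝ × ℝ × ℝ => q.2.2) zp3 q := zp3.hasFDerivAt
  have hcos := (Real.hasDerivAt_cos q.2.2).comp_hasFDerivAt q hp3
  have hsin := (Real.hasDerivAt_sin q.2.2).comp_hasFDerivAt q hp3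
  have hminv := (((hm.differentiable (by simp) q.1).hasDerivAt).inv hne).comp_hasFDerivAt q hp1
  simp only [Function.comp_def] at hcos hsin hminv
  have hdiv := (hcos.mul hminv).neg
  have h := hsin.prodMk (hdiv.prodMk (hasFDerivAt_const (0:ℝ) q))
  simp only [div_eq_mul_inv]
  simp only [Pi.add_apply, Pi.mul_apply, Pi.neg_apply, Pi.inv_apply] at h
  rw [h.fderiv]
  simp [zp1, zp3, ContinuousLinearMap.prod_apply, ContinuousLinearMap.smul_apply, smul_smul]
  field_simp

theorem determinants_DDpDpp
    (μ m : ℝ → ℝ) (hμ : ContDiff ℝ (⊤ : ℕ∞) μ) (hm : ContDiff ℝ (⊤ : ℕ∞) m)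
    (hmpos : ∀ r, 0 < m r)
    (X : ℝ × ℝ × ℝ → ℝ × ℝ × ℝ)
    (hX : X = fun q => (Real.cos q.2.2, μ q.1 + Real.sin q.2.2 / m q.1, (0 : ℝ)))
    (Y : ℝ × ℝ × ℝ → ℝ × ℝ × ℝ)
    (hY : Y = fun _ => ((0 : ℝ), (0 : ℝ), (1 : ℝ))) :
    ∀ q : ℝ × ℝ × ℝ,
      det3 (Y q) (lieBracket Y X q) (lieBracket (lieBracket Y X) Y q) = 1 / m q.1 ∧
      det3 (Y q) (lieBracket Y X q) (lieBracket (lieBracket Y X) X q)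
        = -deriv μ q.1 * Real.sin q.2.2 ^ 2 + deriv m q.1 * Real.sin q.2.2 / (m q.1) ^ 2 ∧
      det3 (Y q) (lieBracket Y X q) (X q) = μ q.1 * Real.sin q.2.2 + 1 / m q.1 := by
  have hYd : ∀ q, fderiv ℝ Y q = 0 := by
    intro q; rw [hY]; exact fderiv_const_apply _
  have hZ : lieBracket Y X
      = fun q : ℝ × ℝ × ℝ => (Real.sin q.2.2, -(Real.cos q.2.2 / m q.1), (0:ℝ)) := by
    funext q
    have hne := ne_of_gt (hmpos q.1)
    unfold lieBracket
    rw [hYd q, hX, fderivX_apply μ m hμ hm hmpos q, hY]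
    simp [Prod.ext_iff]
    field_simp
  intro q
  have hne := ne_of_gt (hmpos q.1)
  have hZY : lieBracket (lieBracket Y X) Y q
      = (Real.cos q.2.2, Real.sin q.2.2 / m q.1, (0:ℝ)) := by
    rw [hZ]
    unfold lieBracket
    rw [hYd q, fderivZ_apply m hm hmpos q, hY]
    simp [Prod.ext_iff]
    field_simp
  have hZX : lieBracket (lieBracket Y X) X q
      = ((0:ℝ), deriv m q.1 / (m q.1)^2 - deriv μ q.1 * Real.sin q.2.2, (0:ℝ)) := by
    rw [hZ]
    unfold lieBracket
    rw [fderivZ_apply m hm hmpos q, hX, fderivX_apply μ m hμ hm hmpos q]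
    simp [Prod.ext_iff]
    field_simp
    linear_combination (deriv m q.1) * Real.sin_sq_add_cos_sq q.2.2
  rw [hZY, hZX, hZ, hX, hY]
  refine ⟨?_, ?_, ?_⟩ <;>
    · simp [det3, Matrix.det_fin_three]
      field_simp
      nlinarith [Real.sin_sq_add_cos_sq q.2.2, sq_nonneg (m q.1), hmpos q.1]
end

section
/- In the Zermelo extended system with m(r)>0, the determinant D = 1/m(r) is never zero, hence the vector fields Y and [Y,X] are everywhere linearly independent together with [[Y,X],Y]; in particular [[Y,X],Y] is never in the span of Y and [Y,X]. -/
open Real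

open ContinuousLinearMap in
noncomputable abbrev pr1 : ℝ × ℝ × ℝ →L[ℝ] ℝ := fst ℝ ℝ (ℝ × ℝ)
open ContinuousLinearMap in
noncomputable abbrev pr3 : ℝ × ℝ × ℝ →L[ℝ] ℝ := (snd ℝ ℝ ℝ).comp (snd ℝ ℝ (ℝ × ℝ))

lemma fderivX (μ m : ℝ → ℝ) (hμ : ContDiff ℝ (⊤ : ℕ∞) μ) (hm : ContDiff ℝ (⊤ : ℕ∞) m) (q : ℝ × ℝ × ℝ)
    (h0 : m q.1 ≠ 0) :
    fderiv ℝ (fun q : ℝ × ℝ × ℝ => (Real.cos q.2.2, μ q.1 + Real.sin q.2.2 / m q.1, (0:ℝ))) q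
      ((0:ℝ), (0:ℝ), (1:ℝ)) = (-Real.sin q.2.2, Real.cos q.2.2 / m q.1, 0) := by
  have h1 : HasFDerivAt (fun q : ℝ × ℝ × ℝ => Real.cos q.2.2) ((-Real.sin q.2.2) • pr3) q :=
    by have := (Real.hasDerivAt_cos q.2.2).comp_hasFDerivAt q pr3.hasFDerivAt; exact this
  have hsin : HasFDerivAt (fun q : ℝ × ℝ × ℝ => Real.sin q.2.2) ((Real.cos q.2.2) • pr3) q :=
    by have := (Real.hasDerivAt_sin q.2.2).comp_hasFDerivAt q pr3.hasFDerivAt; exact this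
  have hμ' : HasFDerivAt (fun q : ℝ × ℝ × ℝ => μ q.1) ((deriv μ q.1) • pr1) q :=
    ((hμ.differentiable (by simp) q.1).hasDerivAt).comp_hasFDerivAt q pr1.hasFDerivAt
  have hm' : HasFDerivAt (fun q : ℝ × ℝ × ℝ => (m q.1)⁻¹)
      ((-(deriv m q.1) / m q.1 ^ 2) • pr1) q :=
    (((hm.differentiable (by simp) q.1).hasDerivAt).inv h0).comp_hasFDerivAt q pr1.hasFDerivAt
  have h2 : HasFDerivAt (fun q : ℝ × ℝ × ℝ => μ q.1 + Real.sin q.2.2 / m q.1)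
      (((deriv μ q.1) • pr1) + (Real.sin q.2.2 • ((-(deriv m q.1) / m q.1 ^ 2) • pr1)
        + (m q.1)⁻¹ • ((Real.cos q.2.2) • pr3))) q := by
    simp only [div_eq_mul_inv]
    exact hμ'.add (hsin.mul hm')
  have H := (HasFDerivAt.prodMk h1 (HasFDerivAt.prodMk h2 (hasFDerivAt_const (0:ℝ) q))).fderiv
  rw [H]
  simp [div_eq_mul_inv, mul_comm]

lemma fderivZ (m : ℝ → ℝ) (hm : ContDiff ℝ (⊤ : ℕ∞) m) (q : ℝ × ℝ × ℝ)
    (h0 : m q.1 ≠ 0) :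
    fderiv ℝ (fun q : ℝ × ℝ × ℝ => (Real.sin q.2.2, -(Real.cos q.2.2 / m q.1), (0:ℝ))) q
      ((0:ℝ), (0:ℝ), (1:ℝ)) = (Real.cos q.2.2, Real.sin q.2.2 / m q.1, 0) := by
  have hsin : HasFDerivAt (fun q : ℝ × ℝ × ℝ => Real.sin q.2.2) ((Real.cos q.2.2) • pr3) q :=
    by have := (Real.hasDerivAt_sin q.2.2).comp_hasFDerivAt q pr3.hasFDerivAt; exact this
  have hcos : HasFDerivAt (fun q : ℝ × ℝ × ℝ => Real.cos q.2.2) ((-Real.sin q.2.2) • pr3) q :=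
    by have := (Real.hasDerivAt_cos q.2.2).comp_hasFDerivAt q pr3.hasFDerivAt; exact this
  have hm' : HasFDerivAt (fun q : ℝ × ℝ × ℝ => (m q.1)⁻¹)
      ((-(deriv m q.1) / m q.1 ^ 2) • pr1) q :=
    (((hm.differentiable (by simp) q.1).hasDerivAt).inv h0).comp_hasFDerivAt q pr1.hasFDerivAt
  have h2 : HasFDerivAt (fun q : ℝ × ℝ × ℝ => -(Real.cos q.2.2 / m q.1))
      (-(Real.cos q.2.2 • ((-(deriv m q.1) / m q.1 ^ 2) • pr1)
        + (m q.1)⁻¹ • ((-Real.sin q.2.2) • pr3))) q := by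
    simp only [div_eq_mul_inv]
    exact (hcos.mul hm').neg
  have H := (HasFDerivAt.prodMk hsin (HasFDerivAt.prodMk h2 (hasFDerivAt_const (0:ℝ) q))).fderiv
  rw [H]
  simp [div_eq_mul_inv, mul_comm]

theorem D_never_zero_and_independence
    (μ m : ℝ → ℝ) (hμ : ContDiff ℝ (⊤ : ℕ∞) μ) (hm : ContDiff ℝ (⊤ : ℕ∞) m)
    (hmpos : ∀ r, 0 < m r)
    (X : ℝ × ℝ × ℝ → ℝ × ℝ × ℝ)
    (hX : X = fun q => (Real.cos q.2.2, μ q.1 + Real.sin q.2.2 / m q.1, (0 : ℝ)))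
    (Y : ℝ × ℝ × ℝ → ℝ × ℝ × ℝ)
    (hY : Y = fun _ => ((0 : ℝ), (0 : ℝ), (1 : ℝ))) :
    ∀ q : ℝ × ℝ × ℝ,
      det3 (Y q) (lieBracket Y X q) (lieBracket (lieBracket Y X) Y q) ≠ 0 ∧
      LinearIndependent ℝ ![Y q, lieBracket Y X q, lieBracket (lieBracket Y X) Y q] ∧
      lieBracket (lieBracket Y X) Y q ∉ Submodule.span ℝ {Y q, lieBracket Y X q} := by
  intro q
  have h0 : ∀ p : ℝ × ℝ × ℝ, m p.1 ≠ 0 := fun p => (hmpos p.1).ne'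
  have hYd : ∀ p : ℝ × ℝ × ℝ, fderiv ℝ Y p = 0 := by
    intro p; rw [hY]; exact fderiv_const_apply _
  have hZ : lieBracket Y X = fun p : ℝ × ℝ × ℝ =>
      (Real.sin p.2.2, -(Real.cos p.2.2 / m p.1), (0:ℝ)) := by
    funext p
    simp only [lieBracket, hYd p, ContinuousLinearMap.zero_apply]
    rw [hY, hX]
    rw [fderivX μ m hμ hm p (h0 p)]
    simp [Prod.ext_iff]
  have hZY : lieBracket (lieBracket Y X) Y q =
      (Real.cos q.2.2, Real.sin q.2.2 / m q.1, (0:ℝ)) := by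
    simp only [lieBracket, hZ]
    rw [hYd q]
    simp only [hY, ContinuousLinearMap.zero_apply]
    rw [fderivZ m hm q (h0 q)]
    simp [Prod.ext_iff]
  have hZq : lieBracket Y X q = (Real.sin q.2.2, -(Real.cos q.2.2 / m q.1), (0:ℝ)) := by
    rw [hZ]
  rw [hZY, hZq, hY]
  set s := Real.sin q.2.2 with hs
  set c := Real.cos q.2.2 with hc
  have hsc : s ^ 2 + c ^ 2 = 1 := Real.sin_sq_add_cos_sq q.2.2
  have hm0 : m q.1 ≠ 0 := h0 q
  refine ⟨?_, ?_, ?_⟩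
  · simp only [det3, Matrix.det_fin_three, Matrix.cons_val', Matrix.cons_val_zero,
      Matrix.cons_val_one, Matrix.head_cons, Matrix.head_fin_const, Matrix.empty_val',
      Matrix.cons_val_fin_one, Matrix.of_apply, Matrix.cons_val_two, Matrix.tail_cons]
    intro h
    have h' : (s ^ 2 + c ^ 2) / m q.1 = 0 := by linear_combination h
    rw [hsc] at h'
    simp [hm0] at h'
  · rw [Fintype.linearIndependent_iff]
    intro g hg
    rw [Fin.sum_univ_three] at hg
    simp only [Matrix.cons_val_zero, Matrix.cons_val_one, Matrix.head_cons,
      Matrix.cons_val_two, Matrix.tail_cons, Prod.smul_mk, smul_eq_mul,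
      Prod.mk_add_mk, Prod.mk_eq_zero] at hg
    obtain ⟨e1, e2, e3⟩ := hg
    have hg0 : g 0 = 0 := by linarith [e3]
    have e1' : g 1 * s + g 2 * c = 0 := by linarith [e1]
    have e2' : -(g 1) * c + g 2 * s = 0 := by
      have h2 := e2
      field_simp at h2
      have h3 : (-(g 1) * c + g 2 * s) * m q.1 = 0 := by linear_combination (m q.1) * h2
      exact (mul_eq_zero.mp h3).resolve_right hm0
    have hg1 : g 1 = 0 := by linear_combination s * e1' - c * e2' - g 1 * hsc
    have hg2 : g 2 = 0 := by linear_combination c * e1' + s * e2' - g 2 * hsc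
    intro i; fin_cases i <;> simp [hg0, hg1, hg2]
  · rw [Submodule.mem_span_pair]
    rintro ⟨a, b, hab⟩
    simp only [Prod.smul_mk, smul_eq_mul, Prod.mk_add_mk, Prod.mk.injEq] at hab
    obtain ⟨e1, e2, e3⟩ := hab
    have hb1 : b * s = c := by linarith [e1]
    have hb2 : -(b * c) = s := by
      field_simp at e2
      have h3 : (-(b * c) - s) * m q.1 = 0 := by linear_combination (m q.1) * e2
      have := (mul_eq_zero.mp h3).resolve_right hm0
      linarith [this]
    have h : s ^ 2 + c ^ 2 = 0 := by linear_combination -c * hb1 - s * hb2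
    linarith [hsc, h]
end

section
/- For the historical Carathéodory–Zermelo system ẋ = y + cos γ, ẏ = sin γ, γ̇ = −cos²γ with γ₀ ∈ (−π/2, π/2), the functions γ(t) = arctan(tan γ₀ − t), y(t) = y₀ + 1/cos γ₀ − 1/cos γ(t), and x(t) = ½[ln|cos γ/(1+sin γ)| + tan γ/cos γ]_{γ₀}^{γ(t)} + (y₀ + 1/cos γ₀) t + x₀ define a solution on all of ℝ with initial condition (x₀, y₀, γ₀). -/
/-!
Since `γ̇ = -cos² γ` means `d(tan γ)/dt = -1`, the heading is `γ(t) = arctan (tan γ₀ - t)` and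
stays in `(-π/2, π/2)`, so `cos γ(t) ≠ 0` throughout. Along such a heading `d(1/cos γ)/dt = -sin γ`,
which gives `y`. The bracket `½(ln|cos γ/(1 + sin γ)| + tan γ/cos γ)` has `γ`-derivative
`sin² γ / cos³ γ`, hence `t`-derivative `-sin² γ / cos γ = cos γ - 1/cos γ`, which gives `x`.
-/

open Real

lemma one_add_sin_ne_zero_of_cos_ne_zero {θ : ℝ} (h : cos θ ≠ 0) : 1 + sin θ ≠ 0 := by
  intro hs
  have hsc := sin_sq_add_cos_sq θ
  exact h (pow_eq_zero_iff two_ne_zero |>.mp (by nlinarith))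

lemma hasDerivAt_log_abs_cos_div_one_add_sin {θ : ℝ} (h : cos θ ≠ 0) :
    HasDerivAt (fun θ => log |cos θ / (1 + sin θ)|) (-1 / cos θ) θ := by
  have hs := one_add_sin_ne_zero_of_cos_ne_zero h
  simp only [log_abs]
  refine (((hasDerivAt_cos θ).div ((hasDerivAt_sin θ).const_add 1) hs).log
    (div_ne_zero h hs)).congr_deriv ?_
  simp only [Pi.div_apply]
  field_simp
  linear_combination -sin_sq_add_cos_sq θ

lemma hasDerivAt_tan_div_cos {θ : ℝ} (h : cos θ ≠ 0) :
    HasDerivAt (fun θ => tan θ / cos θ) ((1 + sin θ ^ 2) / cos θ ^ 3) θ := by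
  have hfun : (fun θ => tan θ / cos θ) = fun θ => sin θ / cos θ ^ 2 := by
    funext θ; rw [tan_eq_sin_div_cos, div_div, sq]
  rw [hfun]
  refine ((hasDerivAt_sin θ).div ((hasDerivAt_cos θ).pow 2) (pow_ne_zero 2 h)).congr_deriv ?_
  simp only [Pi.pow_apply, Nat.cast_ofNat, Nat.add_one_sub_one, pow_one]
  field_simp
  linear_combination sin_sq_add_cos_sq θ

/-- The bracket `½[ln|cos γ/(1 + sin γ)| + tan γ/cos γ]` in the formula for `x`. -/
noncomputable def zermeloPrimitive (γ : ℝ) : ℝ :=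
  (1 / 2) * (log |cos γ / (1 + sin γ)| + tan γ / cos γ)

lemma hasDerivAt_zermeloPrimitive {θ : ℝ} (h : cos θ ≠ 0) :
    HasDerivAt zermeloPrimitive (sin θ ^ 2 / cos θ ^ 3) θ := by
  refine (((hasDerivAt_log_abs_cos_div_one_add_sin h).add
    (hasDerivAt_tan_div_cos h)).const_mul (1 / 2)).congr_deriv ?_
  field_simp
  linear_combination -sin_sq_add_cos_sq θ

lemma hasDerivAt_arctan_const_sub (a t : ℝ) :
    HasDerivAt (fun t => arctan (a - t)) (-cos (arctan (a - t)) ^ 2) t := by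
  refine ((hasDerivAt_arctan (a - t)).comp t ((hasDerivAt_id t).const_sub a)).congr_deriv ?_
  simp [cos_sq_arctan]

section Trajectory

variable {γ : ℝ → ℝ} {t : ℝ}

lemma hasDerivAt_one_div_cos_comp (hγ : HasDerivAt γ (-cos (γ t) ^ 2) t) (h : cos (γ t) ≠ 0) :
    HasDerivAt (fun t => 1 / cos (γ t)) (-sin (γ t)) t := by
  simp only [one_div]
  refine ((hasDerivAt_cos (γ t)).comp t hγ).inv h |>.congr_deriv ?_
  simp only [Function.comp_apply]
  field_simp

lemma hasDerivAt_zermeloPrimitive_comp (hγ : HasDerivAt γ (-cos (γ t) ^ 2) t) (h : cos (γ t) ≠ 0) :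
    HasDerivAt (fun t => zermeloPrimitive (γ t)) (cos (γ t) - 1 / cos (γ t)) t := by
  refine ((hasDerivAt_zermeloPrimitive h).comp t hγ).congr_deriv ?_
  field_simp
  linear_combination -sin_sq_add_cos_sq (γ t)

end Trajectory

theorem historical_explicit_solution
    (x₀ y₀ γ₀ : ℝ) (hγ₀ : γ₀ ∈ Set.Ioo (-(π / 2)) (π / 2))
    (γf yf xf : ℝ → ℝ)
    (hγf : γf = fun t => Real.arctan (Real.tan γ₀ - t))
    (hyf : yf = fun t => y₀ + 1 / Real.cos γ₀ - 1 / Real.cos (γf t))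
    (hxf : xf = fun t =>
      (1 / 2) * ((Real.log |Real.cos (γf t) / (1 + Real.sin (γf t))|
                    - Real.log |Real.cos γ₀ / (1 + Real.sin γ₀)|)
                 + (Real.tan (γf t) / Real.cos (γf t) - Real.tan γ₀ / Real.cos γ₀))
        + (y₀ + 1 / Real.cos γ₀) * t + x₀) :
    xf 0 = x₀ ∧ yf 0 = y₀ ∧ γf 0 = γ₀ ∧
    ∀ t : ℝ,
      HasDerivAt xf (yf t + Real.cos (γf t)) t ∧
      HasDerivAt yf (Real.sin (γf t)) t ∧
      HasDerivAt γf (-(Real.cos (γf t)) ^ 2) t := by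
  have hγ0 : γf 0 = γ₀ := by simp [hγf, arctan_tan hγ₀.1 hγ₀.2]
  have hcos (t : ℝ) : cos (γf t) ≠ 0 :=
    (cos_pos_of_mem_Ioo (hγf ▸ arctan_mem_Ioo _)).ne'
  have hγ' (t : ℝ) : HasDerivAt γf (-cos (γf t) ^ 2) t := hγf ▸ hasDerivAt_arctan_const_sub _ t
  have hxF : xf = fun t =>
      zermeloPrimitive (γf t) - zermeloPrimitive γ₀ + (y₀ + 1 / cos γ₀) * t + x₀ := by
    rw [hxf]; funext t; unfold zermeloPrimitive; ring
  refine ⟨by simp [hxF, hγ0], by simp [hyf, hγ0], hγ0, fun t => ⟨?_, ?_, hγ' t⟩⟩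
  · rw [hxF, hyf]
    refine ((((hasDerivAt_zermeloPrimitive_comp (hγ' t) (hcos t)).sub_const _).add
      ((hasDerivAt_id t).const_mul _)).add_const x₀).congr_deriv ?_
    simp only [mul_one]
    ring
  · rw [hyf]
    simpa using (hasDerivAt_one_div_cos_comp (hγ' t) (hcos t)).const_sub (y₀ + 1 / cos γ₀)
end

section
/- The function D'' = y cos γ + 1 is constant along solutions of the historical system ẋ = y + cos γ, ẏ = sin γ, γ̇ = −cos²γ if it is initially zero; more precisely, if y(0) cos γ(0) + 1 = 0 then y(t) cos γ(t) + 1 = 0 for all t in the interval of definition. -/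
open Real Set NNReal

/-! Along a solution, `D = y cos γ + 1` satisfies the linear equation `D' = sin γ cos γ · D`,
whose coefficient is bounded by `1`; by uniqueness for Lipschitz ODEs, `D` vanishes identically
once it vanishes at one time. -/

section Uniqueness

variable {E : Type*} [NormedAddCommGroup E] [NormedSpace ℝ E]
  {I : Set ℝ} {K : ℝ≥0} {t₀ : ℝ} {f : ℝ → E}

theorem ODE_solution_unique_of_ordConnected {v : ℝ → E → E} {g : ℝ → E}
    (hI : I.OrdConnected) (ht₀ : t₀ ∈ I) (hv : ∀ t ∈ I, LipschitzWith K (v t))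
    (hf : ∀ t ∈ I, HasDerivAt f (v t (f t)) t) (hg : ∀ t ∈ I, HasDerivAt g (v t (g t)) t)
    (heq : f t₀ = g t₀) :
    EqOn f g I := by
  intro t ht
  have hcont {u : ℝ → E} (hu : ∀ t ∈ I, HasDerivAt u (v t (u t)) t) {a b : ℝ}
      (hab : Icc a b ⊆ I) : ContinuousOn u (Icc a b) :=
    HasDerivAt.continuousOn fun s hs ↦ hu s (hab hs)
  rcases le_total t₀ t with h | h
  · have hsub : Icc t₀ t ⊆ I := hI.out ht₀ ht
    have hsub' : Ico t₀ t ⊆ I := Ico_subset_Icc_self.trans hsub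
    exact ODE_solution_unique_of_mem_Icc_right (s := fun _ ↦ univ)
      (fun s hs ↦ (hv s (hsub' hs)).lipschitzOnWith) (hcont hf hsub)
      (fun s hs ↦ (hf s (hsub' hs)).hasDerivWithinAt) (fun _ _ ↦ mem_univ _)
      (hcont hg hsub) (fun s hs ↦ (hg s (hsub' hs)).hasDerivWithinAt) (fun _ _ ↦ mem_univ _)
      heq (right_mem_Icc.2 h)
  · have hsub : Icc t t₀ ⊆ I := hI.out ht ht₀
    have hsub' : Ioc t t₀ ⊆ I := Ioc_subset_Icc_self.trans hsub
    exact ODE_solution_unique_of_mem_Icc_left (s := fun _ ↦ univ)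
      (fun s hs ↦ (hv s (hsub' hs)).lipschitzOnWith) (hcont hf hsub)
      (fun s hs ↦ (hf s (hsub' hs)).hasDerivWithinAt) (fun _ _ ↦ mem_univ _)
      (hcont hg hsub) (fun s hs ↦ (hg s (hsub' hs)).hasDerivWithinAt) (fun _ _ ↦ mem_univ _)
      heq (left_mem_Icc.2 h)

theorem eqOn_zero_of_hasDerivAt_smul_self {a : ℝ → ℝ} (hI : I.OrdConnected) (ht₀ : t₀ ∈ I)
    (ha : ∀ t ∈ I, ‖a t‖₊ ≤ K) (hf : ∀ t ∈ I, HasDerivAt f (a t • f t) t) (hf₀ : f t₀ = 0) :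
    EqOn f 0 I :=
  ODE_solution_unique_of_ordConnected (v := fun t x ↦ a t • x) hI ht₀
    (fun t ht ↦ (lipschitzWith_smul (a t)).weaken (ha t ht)) hf
    (fun t _ ↦ by simp) hf₀

end Uniqueness

theorem nnnorm_sin_mul_cos_le_one (θ : ℝ) : ‖sin θ * cos θ‖₊ ≤ 1 := by
  rw [← NNReal.coe_le_coe, coe_nnnorm, norm_mul, NNReal.coe_one, Real.norm_eq_abs,
    Real.norm_eq_abs]
  exact mul_le_one₀ (abs_sin_le_one θ) (abs_nonneg _) (abs_cos_le_one θ)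

theorem hasDerivAt_mul_cos_add_one {y γ : ℝ → ℝ} {t : ℝ}
    (hy : HasDerivAt y (sin (γ t)) t) (hγ : HasDerivAt γ (-(cos (γ t)) ^ 2) t) :
    HasDerivAt (fun s ↦ y s * cos (γ s) + 1)
      (sin (γ t) * cos (γ t) * (y t * cos (γ t) + 1)) t := by
  refine ((hy.mul hγ.cos).add_const 1).congr_deriv ?_
  ring

theorem abnormal_locus_invariant_general
    (I : Set ℝ) (hI : I.OrdConnected) (h0 : (0 : ℝ) ∈ I)
    (y γ : ℝ → ℝ)
    (hy : ∀ t ∈ I, HasDerivAt y (Real.sin (γ t)) t)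
    (hγ : ∀ t ∈ I, HasDerivAt γ (-(Real.cos (γ t)) ^ 2) t)
    (hinit : y 0 * Real.cos (γ 0) + 1 = 0) :
    ∀ t ∈ I, y t * Real.cos (γ t) + 1 = 0 :=
  eqOn_zero_of_hasDerivAt_smul_self hI h0 (fun t _ ↦ nnnorm_sin_mul_cos_le_one (γ t))
    (fun t ht ↦ hasDerivAt_mul_cos_add_one (hy t ht) (hγ t ht)) hinit

theorem abnormal_locus_invariant
    (I : Set ℝ) (hI : I.OrdConnected) (h0 : (0 : ℝ) ∈ I)
    (x y γ : ℝ → ℝ)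
    (hx : ∀ t ∈ I, HasDerivAt x (y t + Real.cos (γ t)) t)
    (hy : ∀ t ∈ I, HasDerivAt y (Real.sin (γ t)) t)
    (hγ : ∀ t ∈ I, HasDerivAt γ (-(Real.cos (γ t)) ^ 2) t)
    (hinit : y 0 * Real.cos (γ 0) + 1 = 0) :
    ∀ t ∈ I, y t * Real.cos (γ t) + 1 = 0 :=
  abnormal_locus_invariant_general I hI h0 y γ hy hγ hinit
end

section
/- Along an abnormal solution of the historical system with γ₀ ∈ (−π/2, π/2) and y₀ cos γ₀ + 1 = 0 (so y₀ < −1 or y₀ = −1/cos γ₀), the first time at which ẋ(t) = ẏ(t) = 0 simultaneously is t_cusp = tan γ₀, at which γ(t_cusp) = 0 and y(t_cusp) = −1. -/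
open Real

theorem cusp_time_along_abnormal
    (y₀ γ₀ : ℝ) (hγ₀ : γ₀ ∈ Set.Ioo 0 (π / 2))
    (habn : y₀ = -1 / Real.cos γ₀)
    (γf yf : ℝ → ℝ)
    (hγf : γf = fun t => Real.arctan (Real.tan γ₀ - t))
    (hyf : yf = fun t => y₀ + 1 / Real.cos γ₀ - 1 / Real.cos (γf t)) :
    (∀ t : ℝ, (yf t + Real.cos (γf t) = 0 ∧ Real.sin (γf t) = 0) ↔ t = Real.tan γ₀) ∧
    γf (Real.tan γ₀) = 0 ∧ yf (Real.tan γ₀) = -1 := by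
  have hγ0 : γf (Real.tan γ₀) = 0 := by simp [hγf]
  have hy0 : yf (Real.tan γ₀) = -1 := by
    simp [hyf, hγ0, habn]
    ring
  refine ⟨fun t => ?_, hγ0, hy0⟩
  constructor
  · rintro ⟨-, hsin⟩
    rw [hγf] at hsin
    simp only [Real.sin_arctan] at hsin
    have hs : (0:ℝ) < Real.sqrt (1 + (Real.tan γ₀ - t) ^ 2) := by positivity
    have := (div_eq_zero_iff.mp hsin).resolve_right hs.ne'
    linarith
  · rintro rfl
    refine ⟨?_, by simp [hγ0]⟩
    rw [hy0, hγ0]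
    simp
end
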